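/- Let s > 0. Let P be a random variable uniform on {0, 1} and let (S_k)_{k≥1} be a sequence of random variables, each uniform on {−1, 1}, with P and all the S_k mutually independent. Define the stochastic process a : ℕ → ℝ by a(t) = s·S_{(t+P+1)/2} if t + P is odd, and a(t) = 0 if t + P is even, and set δ(t) = a(t+1) − a(t). Then for every t ∈ ℕ: (i) E[δ(t)·δ(t+1)] = −s²/2, and (ii) E[δ(t)·δ(t+k)] = 0 for every integer k ≥ 2. -/

import Mathlib

open MeasureTheory ProbabilityTheory

/-!
Writing `n = t + P`, the increment is `δ(t) = (-1)^n s S_{n/2+1}`, so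
`δ(t) δ(t+k) = (-1)^k s² S_i S_j` with `i = (t+P)/2 + 1` and `j = (t+k+P)/2 + 1`.
Split the expectation according to the value `p` of `P`. If `i ≠ j`, then `S_j` has mean zero
and is independent of `(P, S_i)`, so that piece vanishes. This is always the case when `k ≥ 2`.
For `k = 1` the indices agree for exactly one phase `p`, and that piece equals
`P(P = p) = 1/2` because `S_i² = 1`.
-/

/-- The path `a` of the statement for the phase `p = P ω` and the signs `x = (S · ω)`. -/
def threeStatePath (s : ℝ) (x : ℕ → ℝ) (p n : ℕ) : ℝ :=
  if Odd (n + p) then s * x ((n + p + 1) / 2) else 0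

lemma threeStatePath_succ_sub (s : ℝ) (x : ℕ → ℝ) (p n : ℕ) :
    threeStatePath s x p (n + 1) - threeStatePath s x p n =
      (-1) ^ (n + p) * s * x ((n + p) / 2 + 1) := by
  unfold threeStatePath
  rw [show n + 1 + p = n + p + 1 by ring]
  rcases Nat.even_or_odd' (n + p) with ⟨m, hm | hm⟩ <;> rw [hm]
  · have hidx : (2 * m + 1 + 1) / 2 = 2 * m / 2 + 1 := by omega
    simp [hidx, pow_mul]
  · have hidx : (2 * m + 1 + 1) / 2 = (2 * m + 1) / 2 + 1 := by omega
    simp [hidx, pow_succ, pow_mul, Nat.odd_add_one]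

lemma threeStatePath_increment_mul (s : ℝ) (x : ℕ → ℝ) (p t k : ℕ) :
    (threeStatePath s x p (t + 1) - threeStatePath s x p t) *
        (threeStatePath s x p (t + k + 1) - threeStatePath s x p (t + k)) =
      (-1) ^ k * s ^ 2 * (x ((t + p) / 2 + 1) * x ((t + k + p) / 2 + 1)) := by
  have hsign : ((-1 : ℝ) ^ (t + p)) * (-1) ^ (t + k + p) = (-1) ^ k := by
    rw [← pow_add, show t + p + (t + k + p) = 2 * (t + p) + k by ring, pow_add, pow_mul]
    simp
  rw [threeStatePath_succ_sub, threeStatePath_succ_sub, ← hsign]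
  ring

lemma setOf_eq_one_eq_compl {Ω : Type*} {P : Ω → ℕ} (hPval : ∀ ω, P ω = 0 ∨ P ω = 1) :
    {ω | P ω = 1} = {ω | P ω = 0}ᶜ := by
  ext ω
  rcases hPval ω with h | h <;> simp [h]

section Probability

variable {Ω : Type*} [MeasurableSpace Ω] {μ : Measure Ω}

lemma measureReal_setOf_eq_one [IsProbabilityMeasure μ] {P : Ω → ℕ} (hP : Measurable P)
    (hPval : ∀ ω, P ω = 0 ∨ P ω = 1) :
    μ.real {ω | P ω = 1} = 1 - μ.real {ω | P ω = 0} := by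
  have hm : MeasurableSet {ω | P ω = 0} := hP (measurableSet_singleton 0)
  rw [setOf_eq_one_eq_compl hPval, probReal_compl_eq_one_sub hm]

lemma integral_eq_setIntegral_eq_zero_add_setIntegral_eq_one {P : Ω → ℕ} (hP : Measurable P)
    (hPval : ∀ ω, P ω = 0 ∨ P ω = 1) {F : ℕ → Ω → ℝ} (hF : ∀ p, Integrable (F p) μ) :
    ∫ ω, F (P ω) ω ∂μ = ∫ ω in {ω | P ω = 0}, F 0 ω ∂μ + ∫ ω in {ω | P ω = 1}, F 1 ω ∂μ := by
  classical
  have hm : MeasurableSet {ω | P ω = 0} := hP (measurableSet_singleton 0)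
  have hpw : (fun ω => F (P ω) ω) = {ω | P ω = 0}.piecewise (F 0) (F 1) := by
    ext ω
    rcases hPval ω with h | h <;> simp [Set.piecewise, h]
  rw [hpw, integral_piecewise hm (hF 0).integrableOn (hF 1).integrableOn,
    setOf_eq_one_eq_compl hPval]

lemma integral_eq_zero_of_eq_one_or_eq_neg_one [IsProbabilityMeasure μ] {X : Ω → ℝ}
    (hX : Measurable X) (hval : ∀ ω, X ω = 1 ∨ X ω = -1) (hunif : μ {ω | X ω = 1} = 1 / 2) :
    ∫ ω, X ω ∂μ = 0 := by
  have hm : MeasurableSet {ω | X ω = 1} := hX (measurableSet_singleton 1)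
  have hX_eq : (fun ω => X ω) = fun ω => {ω | X ω = 1}.indicator (fun _ => (2 : ℝ)) ω - 1 := by
    ext ω
    rcases hval ω with h | h <;> norm_num [Set.indicator_apply, h]
  rw [hX_eq, integral_sub ((integrable_const _).indicator hm) (integrable_const _),
    integral_indicator_const _ hm, measureReal_def, hunif]
  norm_num

lemma integrable_mul_of_eq_one_or_eq_neg_one [IsFiniteMeasure μ] {X Y : Ω → ℝ}
    (hX : Measurable X) (hY : Measurable Y) (hXval : ∀ ω, X ω = 1 ∨ X ω = -1)
    (hYval : ∀ ω, Y ω = 1 ∨ Y ω = -1) : Integrable (fun ω => X ω * Y ω) μ :=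
  .of_bound (hX.mul hY).aestronglyMeasurable 1 <| ae_of_all _ fun ω => by
    rcases hXval ω with h | h <;> rcases hYval ω with h' | h' <;> simp [h, h']

lemma setIntegral_mul_self_of_eq_one_or_eq_neg_one {X : Ω → ℝ}
    (hval : ∀ ω, X ω = 1 ∨ X ω = -1) (A : Set Ω) : ∫ ω in A, X ω * X ω ∂μ = μ.real A := by
  have hsq : (fun ω => X ω * X ω) = fun _ => 1 := by
    ext ω
    rcases hval ω with h | h <;> simp [h]
  simp [hsq]

lemma ProbabilityTheory.IndepFun.setIntegral_preimage_mul {β : Type*} [MeasurableSpace β]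
    {X : Ω → β} {Y Z : Ω → ℝ} (h : IndepFun (fun ω => (X ω, Y ω)) Z μ) (hX : Measurable X)
    (hY : Measurable Y) (hZ : AEStronglyMeasurable Z μ) {A : Set β} (hA : MeasurableSet A) :
    ∫ ω in X ⁻¹' A, Y ω * Z ω ∂μ = (∫ ω in X ⁻¹' A, Y ω ∂μ) * ∫ ω, Z ω ∂μ := by
  have hφ : Measurable ((A ×ˢ Set.univ).indicator (Prod.snd : β × ℝ → ℝ)) :=
    measurable_snd.indicator (hA.prod MeasurableSet.univ)
  have hcomp : (X ⁻¹' A).indicator Y =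
      (A ×ˢ Set.univ).indicator Prod.snd ∘ fun ω => (X ω, Y ω) := by
    ext ω
    by_cases hω : X ω ∈ A <;> simp [hω]
  simp_rw [← integral_indicator (hX hA), Set.indicator_mul_left, hcomp]
  exact (h.comp hφ measurable_id).integral_fun_mul_eq_mul_integral
    (hφ.comp (hX.prodMk hY)).aestronglyMeasurable hZ

end Probability

theorem stmt_17 {Ω : Type*} [MeasurableSpace Ω] (μ : Measure Ω) [IsProbabilityMeasure μ]
    (s : ℝ)
    (P : Ω → ℕ) (S : ℕ → Ω → ℝ)
    (hPmeas : Measurable P) (hSmeas : ∀ k, Measurable (S k))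
    (hPval : ∀ ω, P ω = 0 ∨ P ω = 1)
    (hPunif : μ {ω | P ω = 0} = 1/2)
    (hSval : ∀ k, ∀ ω, S k ω = 1 ∨ S k ω = -1)
    (hSunif : ∀ k, μ {ω | S k ω = 1} = 1/2)
    (hindep : iIndepFun
      (β := fun o : Option ℕ => match o with | none => ℕ | some _ => ℝ)
      (m := fun o => match o with
        | none => (inferInstance : MeasurableSpace ℕ)
        | some _ => (inferInstance : MeasurableSpace ℝ))
      (fun o => match o with
        | none => P
        | some k => S k) μ)
    (a : ℕ → Ω → ℝ)
    (ha : ∀ t ω, a t ω = if Odd (t + P ω) then s * S ((t + P ω + 1) / 2) ω else 0)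
    (δ : ℕ → Ω → ℝ) (hδ : ∀ t ω, δ t ω = a (t + 1) ω - a t ω) :
    ∀ t : ℕ,
      (∫ ω, δ t ω * δ (t + 1) ω ∂μ = -(s ^ 2) / 2) ∧
      (∀ k : ℕ, 2 ≤ k → ∫ ω, δ t ω * δ (t + k) ω ∂μ = 0) := by
  intro t
  have hP0 : μ.real {ω | P ω = 0} = 1 / 2 := by simp [measureReal_def, hPunif]
  have hP1 : μ.real {ω | P ω = 1} = 1 / 2 := by
    rw [measureReal_setOf_eq_one hPmeas hPval, hP0]
    norm_num
  have hoff : ∀ p i j, i ≠ j → ∫ ω in {ω | P ω = p}, S i ω * S j ω ∂μ = 0 := by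
    intro p i j hij
    have := (hindep.indepFun_prodMk (by rintro (_ | k); exacts [hPmeas, hSmeas k])
      none (some i) (some j) (by simp) (by simpa)).setIntegral_preimage_mul hPmeas (hSmeas i)
      (hSmeas j).aestronglyMeasurable (measurableSet_singleton p)
    rwa [integral_eq_zero_of_eq_one_or_eq_neg_one (hSmeas j) (hSval j) (hSunif j),
      mul_zero] at this
  have hsplit : ∀ k, ∫ ω, δ t ω * δ (t + k) ω ∂μ = (-1) ^ k * s ^ 2 *
      (∫ ω in {ω | P ω = 0}, S (t / 2 + 1) ω * S ((t + k) / 2 + 1) ω ∂μ +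
        ∫ ω in {ω | P ω = 1}, S ((t + 1) / 2 + 1) ω * S ((t + k + 1) / 2 + 1) ω ∂μ) := by
    intro k
    have hprod : ∀ ω, δ t ω * δ (t + k) ω = (-1) ^ k * s ^ 2 *
        (S ((t + P ω) / 2 + 1) ω * S ((t + k + P ω) / 2 + 1) ω) := fun ω => by
      simp only [hδ, ha]
      exact threeStatePath_increment_mul s (S · ω) (P ω) t k
    simp_rw [hprod, integral_const_mul]
    exact congrArg _ <| integral_eq_setIntegral_eq_zero_add_setIntegral_eq_one hPmeas hPval
      (F := fun p ω => S ((t + p) / 2 + 1) ω * S ((t + k + p) / 2 + 1) ω) fun _ =>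
      integrable_mul_of_eq_one_or_eq_neg_one (hSmeas _) (hSmeas _) (hSval _) (hSval _)
  refine ⟨?_, fun k hk => ?_⟩
  · rw [hsplit]
    rcases Nat.even_or_odd' t with ⟨m, rfl | rfl⟩
    · rw [show (2 * m + 1) / 2 = 2 * m / 2 by omega,
        setIntegral_mul_self_of_eq_one_or_eq_neg_one (hSval _), hoff 1 _ _ (by omega), hP0]
      ring
    · rw [show (2 * m + 1 + 1 + 1) / 2 = (2 * m + 1 + 1) / 2 by omega,
        setIntegral_mul_self_of_eq_one_or_eq_neg_one (hSval _), hoff 0 _ _ (by omega), hP1]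
      ring
  · rw [hsplit, hoff 0 _ _ (by omega), hoff 1 _ _ (by omega)]
    ring
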